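/- arXiv:2101.01110 — 6 statements merged into one kernel-verified Lean document; each statement's English description precedes it below -/
import Mathlib

section
/- Let x, r, a be real numbers with 0 < x < 1, r > 1, a > 0, and let i ≤ j be positive integers. Then there exists ρ > 0 such that for every complex number z with |z| < ρ, all the series below converge and f_{i,j}(z; a) = ∏_{k=1}^{i} f_{1,j}(x^{−i−1+2k} z; a). (This is relation (4.4) of Lemma 4.5, the fusion product formula for the structure functions of the deformed W-superalgebra W_{q,t}(A(M,N)); note f_{i,j} = f_{j,i} by definition.) -/
/-- The q-integer `[n]_x = (x^n - x^{-n})/(x - x^{-1})`, with real powers of `x`. -/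
noncomputable def qint (x n : ℝ) : ℝ := (x ^ n - x ^ (-n)) / (x - x⁻¹)

/-- The `m`-th coefficient of the exponent series defining the structure function
`f_{i,j}(z;a)` of the deformed W-superalgebra `W_{q,t}(A(M,N))`. -/
noncomputable def fCoeff (x r a : ℝ) (i j : ℤ) (m : ℕ) : ℝ :=
  (1 / (m : ℝ)) *
    (qint x ((r - 1) * m) * qint x (r * m) * qint x ((min i j : ℤ) * m) *
      qint x ((a - (max i j : ℤ)) * m)) /
    (qint x (m : ℝ) * qint x (a * m)) * (x - x⁻¹) ^ 2

/-- The `m`-th term of the exponent series of `f_{i,j}(z;a)` (including the minus sign),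
indexed so that `m : ℕ` corresponds to the power `z^(m+1)`. -/
noncomputable def fTerm (x r a : ℝ) (i j : ℤ) (z : ℂ) (m : ℕ) : ℂ :=
  -((fCoeff x r a i j (m + 1) : ℝ) : ℂ) * z ^ (m + 1)

/-- The structure function
`f_{i,j}(z;a) = exp(-Σ_{m≥1} c_m z^m)` of `W_{q,t}(A(M,N))`. -/
noncomputable def fFun (x r a : ℝ) (i j : ℤ) (z : ℂ) : ℂ :=
  Complex.exp (∑' m : ℕ, fTerm x r a i j z m)

/-- The real power `x^t`, regarded as a complex number. -/
noncomputable def xp (x t : ℝ) : ℂ := ((x ^ t : ℝ) : ℂ)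

/-! The fusion formula is an identity between the exponents, coefficient by coefficient:
telescoping gives `[i m]_x = [m]_x Σ_{k=1}^{i} x^{(2k-i-1) m}`, and the factor
`x^{(2k-i-1) m}` is absorbed into `z^m` by rescaling `z`. Convergence comes from the bounds
`|[t]_x| ≤ 2 x^{-|t|} / |x - x⁻¹|` and `[m]_x [a m]_x ≥ [a]_x > 0`, which make the
coefficients grow at most geometrically. -/

open Finset

lemma Finset.sum_Icc_one_sub_int {G : Type*} [AddCommGroup G] (g : ℤ → G) {n : ℤ}
    (hn : 0 ≤ n) :
    ∑ k ∈ Icc 1 n, (g k - g (k - 1)) = g n - g 0 := by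
  induction n, hn using Int.leInduction with
  | base => simp
  | succ n hn ih =>
    rw [← insert_Icc_right_eq_Icc_add_one (by omega), sum_insert (by simp), ih,
      add_sub_cancel_right]
    abel

section QInt

variable {x : ℝ}

lemma qint_mul (hx0 : 0 < x) {i : ℤ} (hi : 0 ≤ i) (t : ℝ) :
    qint x (i * t) = qint x t * ∑ k ∈ Icc 1 i, x ^ ((-(i : ℝ) - 1 + 2 * k) * t) := by
  have hterm : ∀ k : ℤ, (x ^ t - x ^ (-t)) * x ^ ((-(i : ℝ) - 1 + 2 * k) * t) =
      x ^ ((2 * (k : ℝ) - i) * t) - x ^ ((2 * ((k - 1 : ℤ) : ℝ) - i) * t) := by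
    intro k
    rw [sub_mul, ← Real.rpow_add hx0, ← Real.rpow_add hx0]
    push_cast
    ring_nf
  rw [qint, qint, div_mul_eq_mul_div, mul_sum, sum_congr rfl fun k _ => hterm k,
    sum_Icc_one_sub_int (fun k : ℤ => x ^ ((2 * (k : ℝ) - i) * t)) hi]
  push_cast
  ring_nf

lemma sub_inv_neg (hx0 : 0 < x) (hx1 : x < 1) : x - x⁻¹ < 0 := by
  have := (one_lt_inv₀ hx0).2 hx1
  linarith

lemma qint_strictMono (hx0 : 0 < x) (hx1 : x < 1) : StrictMono (qint x) := by
  intro s t hst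
  rw [qint, qint, div_lt_div_right_of_neg (sub_inv_neg hx0 hx1)]
  have h₁ := Real.rpow_lt_rpow_of_exponent_gt hx0 hx1 hst
  have h₂ := Real.rpow_lt_rpow_of_exponent_gt hx0 hx1 (neg_lt_neg hst)
  linarith

lemma qint_zero : qint x 0 = 0 := by
  simp [qint]

lemma qint_one (hx0 : 0 < x) (hx1 : x < 1) : qint x 1 = 1 := by
  rw [qint, Real.rpow_one, Real.rpow_neg_one, div_self (sub_inv_neg hx0 hx1).ne]

lemma qint_pos (hx0 : 0 < x) (hx1 : x < 1) {t : ℝ} (ht : 0 < t) : 0 < qint x t :=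
  qint_zero (x := x) ▸ qint_strictMono hx0 hx1 ht

lemma abs_qint_le (hx0 : 0 < x) (hx1 : x < 1) (t : ℝ) :
    |qint x t| ≤ 2 * x ^ (-|t|) / |x - x⁻¹| := by
  have h₁ := Real.rpow_le_rpow_of_exponent_ge hx0 hx1.le (neg_abs_le t)
  have h₂ := Real.rpow_le_rpow_of_exponent_ge hx0 hx1.le (neg_le_neg (le_abs_self t))
  have hp₁ := Real.rpow_pos_of_pos hx0 t
  have hp₂ := Real.rpow_pos_of_pos hx0 (-t)
  rw [qint, abs_div]
  gcongr
  exact abs_sub_le_iff.2 ⟨by linarith, by linarith⟩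

lemma abs_qint_mul_natCast_le (hx0 : 0 < x) (hx1 : x < 1) (t : ℝ) (m : ℕ) :
    |qint x (t * m)| ≤ 2 / |x - x⁻¹| * (x ^ (-|t|)) ^ m := by
  calc |qint x (t * m)| ≤ 2 * x ^ (-|t * m|) / |x - x⁻¹| := abs_qint_le hx0 hx1 _
    _ = _ := by rw [abs_mul, Nat.abs_cast, ← neg_mul, Real.rpow_mul_natCast hx0.le]; ring

end QInt

section Fusion

variable {x r a : ℝ}

lemma fCoeff_fusion (hx0 : 0 < x) {i j : ℤ} (hi : 1 ≤ i) (hij : i ≤ j) (m : ℕ) :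
    fCoeff x r a i j m =
      ∑ k ∈ Icc 1 i, fCoeff x r a 1 j m * x ^ ((-(i : ℝ) - 1 + 2 * k) * m) := by
  have hj : 1 ≤ j := hi.trans hij
  rw [← mul_sum]
  unfold fCoeff
  rw [min_eq_left hij, max_eq_right hij, min_eq_left hj, max_eq_right hj,
    qint_mul hx0 (by omega : (0 : ℤ) ≤ i), Int.cast_one, one_mul]
  ring

lemma fTerm_fusion (hx0 : 0 < x) {i j : ℤ} (hi : 1 ≤ i) (hij : i ≤ j) (z : ℂ) (m : ℕ) :
    fTerm x r a i j z m =
      ∑ k ∈ Icc 1 i, fTerm x r a 1 j (xp x (-(i : ℝ) - 1 + 2 * k) * z) m := by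
  unfold fTerm xp
  rw [fCoeff_fusion hx0 hi hij (m + 1), Complex.ofReal_sum, ← sum_neg_distrib, sum_mul]
  refine sum_congr rfl fun k _ => ?_
  rw [mul_pow, ← Complex.ofReal_pow, ← Real.rpow_mul_natCast hx0.le]
  push_cast
  ring

end Fusion

section Convergence

variable {x r a : ℝ}

lemma abs_fCoeff_le (hx0 : 0 < x) (hx1 : x < 1) (ha : 0 < a) (i j : ℤ) (m : ℕ) :
    |fCoeff x r a i j m| ≤ 16 / ((x - x⁻¹) ^ 2 * qint x a) *
      (x ^ (-|r - 1|) * x ^ (-|r|) * x ^ (-|((min i j : ℤ) : ℝ)|) *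
        x ^ (-|a - ((max i j : ℤ) : ℝ)|)) ^ m := by
  have hqa := qint_pos hx0 hx1 ha
  have hd : 0 < |x - x⁻¹| := abs_pos.2 (sub_inv_neg hx0 hx1).ne
  rcases m.eq_zero_or_pos with rfl | hm
  · simp [fCoeff]
    positivity
  have hm₁ : (1 : ℝ) ≤ m := by exact_mod_cast hm
  have hinv : |1 / (m : ℝ)| ≤ 1 := by
    rw [abs_of_nonneg (by positivity)]
    exact div_le_one_of_le₀ hm₁ (by positivity)
  -- the denominator `[m]_x [a m]_x` is at least `[1]_x [a]_x = [a]_x`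
  have hden : qint x a ≤ |qint x m * qint x (a * m)| := by
    have h₁ : 1 ≤ qint x m := qint_one hx0 hx1 ▸ (qint_strictMono hx0 hx1).monotone hm₁
    have h₂ : qint x a ≤ qint x (a * m) :=
      (qint_strictMono hx0 hx1).monotone (le_mul_of_one_le_right ha.le hm₁)
    calc qint x a = 1 * qint x a := (one_mul _).symm
      _ ≤ qint x m * qint x (a * m) := mul_le_mul h₁ h₂ hqa.le (by linarith)
      _ ≤ _ := le_abs_self _
  have hq := abs_qint_mul_natCast_le (m := m) hx0 hx1
  calc |fCoeff x r a i j m|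
      = |1 / (m : ℝ)| * (|qint x ((r - 1) * m)| * |qint x (r * m)| *
          |qint x ((min i j : ℤ) * m)| * |qint x ((a - (max i j : ℤ)) * m)|) /
          |qint x m * qint x (a * m)| * |x - x⁻¹| ^ 2 := by
        simp only [fCoeff, abs_mul, abs_div, abs_pow]
    _ ≤ 1 * (2 / |x - x⁻¹| * (x ^ (-|r - 1|)) ^ m * (2 / |x - x⁻¹| * (x ^ (-|r|)) ^ m) *
          (2 / |x - x⁻¹| * (x ^ (-|((min i j : ℤ) : ℝ)|)) ^ m) *
          (2 / |x - x⁻¹| * (x ^ (-|a - ((max i j : ℤ) : ℝ)|)) ^ m)) /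
          qint x a * |x - x⁻¹| ^ 2 := by
        gcongr
        exacts [hq _, hq _, hq _, hq _]
    _ = _ := by
        rw [mul_pow, mul_pow, mul_pow, ← sq_abs (x - x⁻¹)]
        field_simp
        ring

lemma summable_ofReal_mul_pow {c : ℕ → ℝ} {C M : ℝ} (hM : 0 ≤ M)
    (hc : ∀ m, |c m| ≤ C * M ^ m) {z : ℂ} (hz : M * ‖z‖ < 1) :
    Summable fun m => (c m : ℂ) * z ^ m := by
  refine Summable.of_norm_bounded
    ((summable_geometric_of_lt_one (by positivity) hz).mul_left C) fun m => ?_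
  rw [norm_mul, Complex.norm_real, Real.norm_eq_abs, norm_pow, mul_pow, ← mul_assoc]
  gcongr
  exact hc m

lemma exists_summable_fTerm (hx0 : 0 < x) (hx1 : x < 1) (ha : 0 < a) (i j : ℤ) :
    ∃ ρ > 0, ∀ z : ℂ, ‖z‖ < ρ → Summable (fTerm x r a i j z) := by
  set M := x ^ (-|r - 1|) * x ^ (-|r|) * x ^ (-|((min i j : ℤ) : ℝ)|) *
    x ^ (-|a - ((max i j : ℤ) : ℝ)|)
  have hM : 0 < M := by positivity
  refine ⟨1 / M, by positivity, fun z hz => ?_⟩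
  have hsum := summable_ofReal_mul_pow hM.le (abs_fCoeff_le hx0 hx1 ha i j)
    (by rwa [lt_div_iff₀' hM] at hz)
  exact ((summable_nat_add_iff 1).2 hsum).neg.congr fun m => by simp [fTerm]

lemma norm_xp_mul_lt (hx0 : 0 < x) (hx1 : x < 1) {s t ρ : ℝ} (hst : s ≤ t) {z : ℂ}
    (hz : ‖z‖ < ρ / x ^ s) : ‖xp x t * z‖ < ρ := by
  have hxs := Real.rpow_pos_of_pos hx0 s
  rw [lt_div_iff₀' hxs] at hz
  rw [norm_mul, xp, Complex.norm_real, Real.norm_of_nonneg (Real.rpow_pos_of_pos hx0 t).le]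
  calc x ^ t * ‖z‖ ≤ x ^ s * ‖z‖ := mul_le_mul_of_nonneg_right
        (Real.rpow_le_rpow_of_exponent_ge hx0 hx1.le hst) (norm_nonneg z)
    _ < ρ := hz

end Convergence

theorem statement0_general (x r a : ℝ) (hx0 : 0 < x) (hx1 : x < 1) (ha : 0 < a)
    (i j : ℤ) (hi : 1 ≤ i) (hij : i ≤ j) :
    ∃ ρ : ℝ, 0 < ρ ∧ ∀ z : ℂ, ‖z‖ < ρ →
      Summable (fTerm x r a i j z) ∧
      (∀ k ∈ Finset.Icc (1 : ℤ) i,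
        Summable (fTerm x r a 1 j (xp x (-(i : ℝ) - 1 + 2 * (k : ℝ)) * z))) ∧
      fFun x r a i j z =
        ∏ k ∈ Finset.Icc (1 : ℤ) i, fFun x r a 1 j (xp x (-(i : ℝ) - 1 + 2 * (k : ℝ)) * z) := by
  obtain ⟨ρ, hρ, hsum⟩ := exists_summable_fTerm (r := r) hx0 hx1 ha 1 j
  refine ⟨ρ / x ^ (1 - (i : ℝ)), by positivity, fun z hz => ?_⟩
  have hsumk : ∀ k ∈ Icc (1 : ℤ) i,
      Summable (fTerm x r a 1 j (xp x (-(i : ℝ) - 1 + 2 * (k : ℝ)) * z)) := by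
    intro k hk
    have hk1 : (1 : ℝ) ≤ k := by exact_mod_cast (mem_Icc.1 hk).1
    exact hsum _ (norm_xp_mul_lt hx0 hx1 (by linarith) hz)
  have hfusion := funext (fTerm_fusion (r := r) (a := a) hx0 hi hij z)
  refine ⟨hfusion ▸ summable_sum hsumk, hsumk, ?_⟩
  rw [fFun, hfusion, Summable.tsum_finsetSum hsumk, Complex.exp_sum]
  rfl

/-- Relation (4.4) of Lemma 4.5: the fusion product formula
`f_{i,j}(z;a) = ∏_{k=1}^{i} f_{1,j}(x^{-i-1+2k} z; a)`,
valid (with all series convergent) for `z` of sufficiently small modulus. -/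
theorem statement0 (x r a : ℝ) (hx0 : 0 < x) (hx1 : x < 1) (hr : 1 < r) (ha : 0 < a)
    (i j : ℤ) (hi : 1 ≤ i) (hij : i ≤ j) :
    ∃ ρ : ℝ, 0 < ρ ∧ ∀ z : ℂ, ‖z‖ < ρ →
      Summable (fTerm x r a i j z) ∧
      (∀ k ∈ Finset.Icc (1 : ℤ) i,
        Summable (fTerm x r a 1 j (xp x (-(i : ℝ) - 1 + 2 * (k : ℝ)) * z))) ∧
      fFun x r a i j z =
        ∏ k ∈ Finset.Icc (1 : ℤ) i, fFun x r a 1 j (xp x (-(i : ℝ) - 1 + 2 * (k : ℝ)) * z) :=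
  statement0_general x r a hx0 hx1 ha i j hi hij
end

section
/- Let x, r, a be real numbers with 0 < x < 1, r > 1, a > 0, let i, j ≥ 1 be integers, and fix a sign ϵ ∈ {+1, −1}. Then there exists ρ > 0 such that for every complex number z with |z| < ρ: if i ≤ j then f_{1,i}(z; a) · f_{j,i}(x^{ϵ(j+1)} z; a) = f_{j+1,i}(x^{ϵ j} z; a) · Δ_1(x^{ϵ i} z), while if j < i then f_{1,i}(z; a) · f_{j,i}(x^{ϵ(j+1)} z; a) = f_{j+1,i}(x^{ϵ j} z; a). (This is relation (4.6) of Lemma 4.5.) -/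
/-- The function `Δ_i(z) = (1 - x^{2r-i}z)(1 - x^{-2r+i}z)/((1 - x^i z)(1 - x^{-i}z))`. -/
noncomputable def Delta (x r : ℝ) (i : ℝ) (z : ℂ) : ℂ :=
  ((1 - xp x (2 * r - i) * z) * (1 - xp x (-(2 * r) + i) * z)) /
    ((1 - xp x i * z) * (1 - xp x (-i) * z))

open Filter Topology

noncomputable def qbracket (y s : ℝ) : ℝ := y ^ s - y ^ (-s)

noncomputable def structCoeff (y r a : ℝ) (k l : ℤ) : ℝ :=
  qbracket y (r - 1) * qbracket y r * qbracket y (min k l : ℤ) *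
    qbracket y (a - (max k l : ℤ)) / (qbracket y 1 * qbracket y a)

lemma qint_mul_s2 {x : ℝ} (hx : 0 ≤ x) (s t : ℝ) :
    qint x (s * t) = qbracket (x ^ t) s / (x - x⁻¹) := by
  rw [qint, qbracket, ← Real.rpow_mul hx, ← Real.rpow_mul hx, mul_neg, mul_comm t]

lemma fCoeff_eq_structCoeff {x : ℝ} (hx0 : 0 < x) (hx1 : x ≠ 1) (r a : ℝ) (k l : ℤ)
    (n : ℕ) :
    fCoeff x r a k l n = structCoeff (x ^ (n : ℝ)) r a k l / n := by
  have hd : x - x⁻¹ ≠ 0 := by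
    refine sub_ne_zero.2 fun h => hx1 ?_
    field_simp at h
    nlinarith
  rw [fCoeff, structCoeff, ← one_mul (n : ℝ), qint_mul_s2 hx0.le, qint_mul_s2 hx0.le, qint_mul_s2 hx0.le,
    qint_mul_s2 hx0.le, qint_mul_s2 hx0.le, qint_mul_s2 hx0.le, one_mul]
  generalize x - x⁻¹ = d at hd ⊢
  field_simp

lemma qbracket_sub_one_mul_qbracket {y : ℝ} (hy : 0 < y) (r : ℝ) :
    qbracket y (r - 1) * qbracket y r
      = y ^ (2 * r - 1) + y ^ (-(2 * r) + 1) - y ^ (1 : ℝ) - y ^ (-1 : ℝ) := by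
  simp only [qbracket, neg_add, neg_sub, two_mul, Real.rpow_add hy, Real.rpow_sub hy,
    Real.rpow_neg hy.le, Real.rpow_one]
  field_simp
  ring

lemma qbracket_sub_relation {y : ℝ} (hy : 0 < y) (a u v e : ℝ) (he : e = 1 ∨ e = -1) :
    qbracket y 1 * qbracket y (a - u) + qbracket y u * qbracket y (a - v) * y ^ (e * (v + 1))
      - qbracket y u * qbracket y (a - (v + 1)) * y ^ (e * v)
      = y ^ (e * u) * (qbracket y 1 * qbracket y a) := by
  rcases he with rfl | rfl <;>
  simp only [qbracket, one_mul, neg_one_mul, neg_add, neg_sub, Real.rpow_add hy,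
    Real.rpow_sub hy, Real.rpow_neg hy.le, Real.rpow_one] <;>
  field_simp <;>
  ring

lemma qbracket_add_one_relation {y : ℝ} (hy : 0 < y) (v e : ℝ) (he : e = 1 ∨ e = -1) :
    qbracket y 1 + qbracket y v * y ^ (e * (v + 1)) - qbracket y (v + 1) * y ^ (e * v) = 0 := by
  rcases he with rfl | rfl <;>
  simp only [qbracket, one_mul, neg_one_mul, neg_add, Real.rpow_add hy, Real.rpow_neg hy.le,
    Real.rpow_one] <;>
  field_simp <;>
  ring

lemma structCoeff_relation_of_le {y : ℝ} (hy : 0 < y) (r a : ℝ) {i j : ℤ} (hi : 1 ≤ i)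
    (hij : i ≤ j) (hden : qbracket y 1 * qbracket y a ≠ 0) {e : ℝ} (he : e = 1 ∨ e = -1) :
    structCoeff y r a 1 i + structCoeff y r a j i * y ^ (e * ((j : ℝ) + 1))
      - structCoeff y r a (j + 1) i * y ^ (e * (j : ℝ))
      = y ^ (2 * r - 1) * y ^ (e * (i : ℝ)) + y ^ (-(2 * r) + 1) * y ^ (e * (i : ℝ))
        - y ^ (1 : ℝ) * y ^ (e * (i : ℝ)) - y ^ (-1 : ℝ) * y ^ (e * (i : ℝ)) := by
  rw [structCoeff, structCoeff, structCoeff, min_eq_left hi, max_eq_right hi, min_eq_right hij,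
    max_eq_left hij, min_eq_right (by omega), max_eq_left (by omega)]
  push_cast
  calc _ = qbracket y (r - 1) * qbracket y r / (qbracket y 1 * qbracket y a) *
        (qbracket y 1 * qbracket y (a - i) + qbracket y i * qbracket y (a - j) * y ^ (e * (j + 1))
          - qbracket y i * qbracket y (a - (j + 1)) * y ^ (e * j)) := by ring
    _ = _ := by
      rw [qbracket_sub_relation hy a i j e he, mul_comm (y ^ _), ← mul_assoc,
        div_mul_cancel₀ _ hden, qbracket_sub_one_mul_qbracket hy]
      ring

lemma structCoeff_relation_of_lt {y : ℝ} (hy : 0 < y) (r a : ℝ) {i j : ℤ} (hi : 1 ≤ i)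
    (hji : j < i) {e : ℝ} (he : e = 1 ∨ e = -1) :
    structCoeff y r a 1 i + structCoeff y r a j i * y ^ (e * ((j : ℝ) + 1))
      - structCoeff y r a (j + 1) i * y ^ (e * (j : ℝ)) = 0 := by
  rw [structCoeff, structCoeff, structCoeff, min_eq_left hi, max_eq_right hi,
    min_eq_left hji.le, max_eq_right hji.le, min_eq_left (by omega), max_eq_right (by omega)]
  push_cast
  calc _ = qbracket y (r - 1) * qbracket y r * qbracket y (a - i) /
        (qbracket y 1 * qbracket y a) *
        (qbracket y 1 + qbracket y j * y ^ (e * (j + 1)) - qbracket y (j + 1) * y ^ (e * j)) := by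
          ring
    _ = 0 := by rw [qbracket_add_one_relation hy j e he, mul_zero]

lemma abs_qbracket_le {y : ℝ} (hy0 : 0 < y) (hy1 : y ≤ 1) (s : ℝ) :
    |qbracket y s| ≤ y ^ (-|s|) :=
  abs_sub_le_of_nonneg_of_le (Real.rpow_nonneg hy0.le _)
    (Real.rpow_le_rpow_of_exponent_ge hy0 hy1 (neg_abs_le s)) (Real.rpow_nonneg hy0.le _)
    (Real.rpow_le_rpow_of_exponent_ge hy0 hy1 (neg_le_neg (le_abs_self s)))

lemma one_sub_rpow_le_abs_qbracket {x y s : ℝ} (hy0 : 0 < y) (hyx : y ≤ x) (hx1 : x ≤ 1)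
    (hs : 0 ≤ s) : 1 - x ^ s ≤ |qbracket y s| := by
  have hys : y ^ s ≤ x ^ s := Real.rpow_le_rpow hy0.le hyx hs
  have hy_neg : 1 ≤ y ^ (-s) :=
    Real.one_le_rpow_of_pos_of_le_one_of_nonpos hy0 (hyx.trans hx1) (neg_nonpos.2 hs)
  rw [qbracket, abs_sub_comm]
  exact le_trans (by linarith) (le_abs_self _)

lemma qbracket_ne_zero {y s : ℝ} (hy0 : 0 < y) (hy1 : y < 1) (hs : 0 < s) : qbracket y s ≠ 0 :=
  abs_pos.1 <| (sub_pos.2 (Real.rpow_lt_one hy0.le hy1 hs)).trans_le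
    (one_sub_rpow_le_abs_qbracket hy0 le_rfl hy1.le hs.le)

lemma abs_structCoeff_le {x y : ℝ} (hy0 : 0 < y) (hyx : y ≤ x) (hx1 : x < 1) (r : ℝ) {a : ℝ}
    (ha : 0 < a) (k l : ℤ) :
    |structCoeff y r a k l| ≤
      y ^ (-(|r - 1| + |r| + |((min k l : ℤ) : ℝ)| + |a - (max k l : ℤ)|)) /
        ((1 - x) * (1 - x ^ a)) := by
  have hy1 : y ≤ 1 := hyx.trans hx1.le
  have hxa : 0 < 1 - x ^ a := sub_pos.2 (Real.rpow_lt_one (hy0.le.trans hyx) hx1 ha)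
  have h1 : 1 - x ≤ |qbracket y 1| := by
    simpa using one_sub_rpow_le_abs_qbracket hy0 hyx hx1.le zero_le_one
  have ha' : 1 - x ^ a ≤ |qbracket y a| := one_sub_rpow_le_abs_qbracket hy0 hyx hx1.le ha.le
  simp only [neg_add, Real.rpow_add hy0]
  rw [structCoeff, abs_div, abs_mul, abs_mul, abs_mul, abs_mul]
  refine div_le_div₀ (by positivity) ?_ (mul_pos (sub_pos.2 hx1) hxa)
    (mul_le_mul h1 ha' hxa.le (abs_nonneg _))
  gcongr <;> exact abs_qbracket_le hy0 hy1 _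

lemma eventually_summable_fTerm {x : ℝ} (hx0 : 0 < x) (hx1 : x < 1) (r : ℝ) {a : ℝ} (ha : 0 < a)
    (k l : ℤ) : ∀ᶠ z in 𝓝 (0 : ℂ), Summable (fTerm x r a k l z) := by
  set K := |r - 1| + |r| + |((min k l : ℤ) : ℝ)| + |a - (max k l : ℤ)|
  set C := ((1 - x) * (1 - x ^ a))⁻¹
  refine Metric.eventually_nhds_iff.2 ⟨x ^ K, by positivity, fun z hz => ?_⟩
  rw [dist_zero_right] at hz
  set t := x ^ (-K) * ‖z‖
  have ht : t < 1 := by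
    calc t < x ^ (-K) * x ^ K := mul_lt_mul_of_pos_left hz (by positivity)
      _ = 1 := by rw [← Real.rpow_add hx0, neg_add_cancel, Real.rpow_zero]
  refine ((summable_geometric_of_lt_one (by positivity) ht).mul_left (C * t)).of_norm_bounded
    fun m => ?_
  have hy0 : 0 < x ^ ((m + 1 : ℕ) : ℝ) := by positivity
  have hyx : x ^ ((m + 1 : ℕ) : ℝ) ≤ x := by
    simpa using Real.rpow_le_rpow_of_exponent_ge hx0 hx1.le (by simp : (1 : ℝ) ≤ (m + 1 : ℕ))
  have hpow : (x ^ ((m + 1 : ℕ) : ℝ)) ^ (-K) = (x ^ (-K)) ^ (m + 1) := by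
    rw [← Real.rpow_mul hx0.le, mul_comm, Real.rpow_mul hx0.le, Real.rpow_natCast]
  calc ‖fTerm x r a k l z m‖
      = |structCoeff (x ^ ((m + 1 : ℕ) : ℝ)) r a k l| / (m + 1 : ℕ) * ‖z‖ ^ (m + 1) := by
        rw [fTerm, fCoeff_eq_structCoeff hx0 hx1.ne, norm_mul, norm_neg, Complex.norm_real,
          norm_pow, Real.norm_eq_abs, abs_div, Nat.abs_cast]
    _ ≤ |structCoeff (x ^ ((m + 1 : ℕ) : ℝ)) r a k l| * ‖z‖ ^ (m + 1) := by
        gcongr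
        exact div_le_self (abs_nonneg _) (by simp)
    _ ≤ (x ^ ((m + 1 : ℕ) : ℝ)) ^ (-K) / ((1 - x) * (1 - x ^ a)) * ‖z‖ ^ (m + 1) := by
        gcongr
        exact abs_structCoeff_le hy0 hyx hx1 r ha k l
    _ = C * t * t ^ m := by
        rw [hpow]
        ring

lemma xp_pow {x : ℝ} (hx : 0 ≤ x) (t : ℝ) (n : ℕ) :
    xp x t ^ n = (((x ^ (n : ℝ)) ^ t : ℝ) : ℂ) := by
  rw [xp, ← Complex.ofReal_pow, ← Real.rpow_natCast, ← Real.rpow_mul hx, ← Real.rpow_mul hx,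
    mul_comm]

lemma fTerm_relation_of_le {x : ℝ} (hx0 : 0 < x) (hx1 : x < 1) (r : ℝ) {a : ℝ} (ha : 0 < a)
    {i j : ℤ} (hi : 1 ≤ i) (hij : i ≤ j) {e : ℝ} (he : e = 1 ∨ e = -1) (z : ℂ) (m : ℕ) :
    fTerm x r a 1 i z m + fTerm x r a j i (xp x (e * ((j : ℝ) + 1)) * z) m =
      fTerm x r a (j + 1) i (xp x (e * (j : ℝ)) * z) m +
        ((xp x 1 * (xp x (e * (i : ℝ)) * z)) ^ (m + 1) / (m + 1)
          + (xp x (-1) * (xp x (e * (i : ℝ)) * z)) ^ (m + 1) / (m + 1)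
          - (xp x (2 * r - 1) * (xp x (e * (i : ℝ)) * z)) ^ (m + 1) / (m + 1)
          - (xp x (-(2 * r) + 1) * (xp x (e * (i : ℝ)) * z)) ^ (m + 1) / (m + 1)) := by
  have hy0 : 0 < x ^ ((m : ℝ) + 1) := by positivity
  have hy1 : x ^ ((m : ℝ) + 1) < 1 := Real.rpow_lt_one hx0.le hx1 (by positivity)
  have key := congrArg (fun t : ℝ => (t : ℂ)) <| structCoeff_relation_of_le hy0 r a hi hij
    (mul_ne_zero (qbracket_ne_zero hy0 hy1 one_pos) (qbracket_ne_zero hy0 hy1 ha)) he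
  simp only [fTerm, fCoeff_eq_structCoeff hx0 hx1.ne, mul_pow, xp_pow hx0.le] at key ⊢
  push_cast at key ⊢
  linear_combination (-z ^ (m + 1) / (m + 1)) * key

lemma fTerm_relation_of_lt {x : ℝ} (hx0 : 0 < x) (hx1 : x < 1) (r a : ℝ)
    {i j : ℤ} (hi : 1 ≤ i) (hji : j < i) {e : ℝ} (he : e = 1 ∨ e = -1) (z : ℂ) (m : ℕ) :
    fTerm x r a 1 i z m + fTerm x r a j i (xp x (e * ((j : ℝ) + 1)) * z) m =
      fTerm x r a (j + 1) i (xp x (e * (j : ℝ)) * z) m := by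
  have key := congrArg (fun t : ℝ => (t : ℂ)) <|
    structCoeff_relation_of_lt (y := x ^ ((m : ℝ) + 1)) (by positivity) r a hi hji he
  simp only [fTerm, fCoeff_eq_structCoeff hx0 hx1.ne, mul_pow, xp_pow hx0.le] at key ⊢
  push_cast at key ⊢
  linear_combination (-z ^ (m + 1) / (m + 1)) * key

lemma exp_tsum_mul_exp_tsum {F G H L : ℕ → ℂ} {s : ℂ} (hF : Summable F) (hG : Summable G)
    (hL : HasSum L s) (h : ∀ m, F m + G m = H m + L m) :
    Complex.exp (∑' m, F m) * Complex.exp (∑' m, G m) =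
      Complex.exp (∑' m, H m) * Complex.exp s := by
  have hH : HasSum H (∑' m, F m + ∑' m, G m - s) := by
    simpa [h] using (hF.hasSum.add hG.hasSum).sub hL
  rw [← Complex.exp_add, ← Complex.exp_add, hH.tsum_eq, sub_add_cancel]

lemma one_sub_ne_zero_of_norm_lt_one {R : Type*} [NormedRing R] [NormOneClass R] {w : R}
    (hw : ‖w‖ < 1) : 1 - w ≠ 0 :=
  sub_ne_zero.2 fun h => by simp [← h] at hw

lemma exists_hasSum_exp_eq_div {w₁ w₂ w₃ w₄ : ℂ} (h₁ : ‖w₁‖ < 1) (h₂ : ‖w₂‖ < 1)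
    (h₃ : ‖w₃‖ < 1) (h₄ : ‖w₄‖ < 1) :
    ∃ s, HasSum (fun m : ℕ => w₃ ^ (m + 1) / (m + 1) + w₄ ^ (m + 1) / (m + 1)
        - w₁ ^ (m + 1) / (m + 1) - w₂ ^ (m + 1) / (m + 1)) s ∧
      Complex.exp s = (1 - w₁) * (1 - w₂) / ((1 - w₃) * (1 - w₄)) := by
  refine ⟨_, (((Complex.hasSum_taylorSeries_neg_log' h₃).add
    (Complex.hasSum_taylorSeries_neg_log' h₄)).sub (Complex.hasSum_taylorSeries_neg_log' h₁)).sub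
    (Complex.hasSum_taylorSeries_neg_log' h₂), ?_⟩
  simp only [Complex.exp_sub, Complex.exp_add, Complex.exp_neg, div_inv_eq_mul,
    Complex.exp_log (one_sub_ne_zero_of_norm_lt_one h₁),
    Complex.exp_log (one_sub_ne_zero_of_norm_lt_one h₂),
    Complex.exp_log (one_sub_ne_zero_of_norm_lt_one h₃),
    Complex.exp_log (one_sub_ne_zero_of_norm_lt_one h₄)]
  rw [div_eq_mul_inv, mul_inv]
  ring

lemma eventually_const_mul {M : Type*} [MulZeroClass M] [TopologicalSpace M] [ContinuousMul M]
    {p : M → Prop} (h : ∀ᶠ z in 𝓝 0, p z) (c : M) :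
    ∀ᶠ z in 𝓝 0, p (c * z) :=
  ((continuous_const_mul c).tendsto' 0 0 (mul_zero c)).eventually h

lemma exists_pos_forall_norm_lt_of_eventually {E : Type*} [SeminormedAddCommGroup E]
    {p : E → Prop} (h : ∀ᶠ z in 𝓝 0, p z) : ∃ ρ : ℝ, 0 < ρ ∧ ∀ z : E, ‖z‖ < ρ → p z := by
  obtain ⟨ρ, hρ, hp⟩ := Metric.eventually_nhds_iff.1 h
  exact ⟨ρ, hρ, fun z hz => hp (by rwa [dist_zero_right])⟩

theorem statement2_general (x r a : ℝ) (hx0 : 0 < x) (hx1 : x < 1) (ha : 0 < a)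
    (i j : ℤ) (hi : 1 ≤ i) (e : ℝ) (he : e = 1 ∨ e = -1) :
    ∃ ρ : ℝ, 0 < ρ ∧ ∀ z : ℂ, ‖z‖ < ρ →
      (i ≤ j →
        fFun x r a 1 i z * fFun x r a j i (xp x (e * ((j : ℝ) + 1)) * z) =
          fFun x r a (j + 1) i (xp x (e * (j : ℝ)) * z) * Delta x r 1 (xp x (e * (i : ℝ)) * z)) ∧
      (j < i →
        fFun x r a 1 i z * fFun x r a j i (xp x (e * ((j : ℝ) + 1)) * z) =
          fFun x r a (j + 1) i (xp x (e * (j : ℝ)) * z)) := by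
  have hsmall (t : ℝ) : ∀ᶠ z in 𝓝 (0 : ℂ), ‖xp x t * (xp x (e * (i : ℝ)) * z)‖ < 1 :=
    eventually_const_mul (p := fun w => ‖xp x t * w‖ < 1)
      (eventually_const_mul (p := fun w => ‖w‖ < 1)
        (Eventually.mono (Metric.ball_mem_nhds 0 one_pos) fun _ => mem_ball_zero_iff.1) _) _
  apply exists_pos_forall_norm_lt_of_eventually
  filter_upwards [eventually_summable_fTerm hx0 hx1 r ha 1 i,
    eventually_const_mul (eventually_summable_fTerm hx0 hx1 r ha j i) (xp x (e * ((j : ℝ) + 1))),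
    hsmall (2 * r - 1), hsmall (-(2 * r) + 1), hsmall 1, hsmall (-1)] with z hF hG h₁ h₂ h₃ h₄
  refine ⟨fun hij => ?_, fun hji => ?_⟩
  · obtain ⟨s, hs, hexp⟩ := exists_hasSum_exp_eq_div h₁ h₂ h₃ h₄
    rw [fFun, fFun, fFun, exp_tsum_mul_exp_tsum hF hG hs
      (fTerm_relation_of_le hx0 hx1 r ha hi hij he z), hexp, Delta]
  · rw [fFun, fFun, fFun, exp_tsum_mul_exp_tsum hF hG hasSum_zero
      (fun m => (fTerm_relation_of_lt hx0 hx1 r a hi hji he z m).trans (add_zero _).symm),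
      Complex.exp_zero, mul_one]

/-- Relation (4.6) of Lemma 4.5: for a sign `e ∈ {+1,-1}`,
if `i ≤ j` then `f_{1,i}(z;a) f_{j,i}(x^{e(j+1)}z;a) = f_{j+1,i}(x^{ej}z;a) Δ_1(x^{ei}z)`,
while if `j < i` then `f_{1,i}(z;a) f_{j,i}(x^{e(j+1)}z;a) = f_{j+1,i}(x^{ej}z;a)`,
for `z` of sufficiently small modulus. -/
theorem statement2 (x r a : ℝ) (hx0 : 0 < x) (hx1 : x < 1) (hr : 1 < r) (ha : 0 < a)
    (i j : ℤ) (hi : 1 ≤ i) (hj : 1 ≤ j) (e : ℝ) (he : e = 1 ∨ e = -1) :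
    ∃ ρ : ℝ, 0 < ρ ∧ ∀ z : ℂ, ‖z‖ < ρ →
      (i ≤ j →
        fFun x r a 1 i z * fFun x r a j i (xp x (e * ((j : ℝ) + 1)) * z) =
          fFun x r a (j + 1) i (xp x (e * (j : ℝ)) * z) * Delta x r 1 (xp x (e * (i : ℝ)) * z)) ∧
      (j < i →
        fFun x r a 1 i z * fFun x r a j i (xp x (e * ((j : ℝ) + 1)) * z) =
          fFun x r a (j + 1) i (xp x (e * (j : ℝ)) * z)) :=
  statement2_general x r a hx0 hx1 ha i j hi e he
end

section
/- Let x and r be real numbers with 0 < x < 1 and r > 1, and let i ≥ 2 be an integer. Then for every complex number z for which the denominators of all factors below are nonzero (i.e. z ∉ {x^{±(i+1)}} ∪ {x^{±1}·x^{i−2k} : 1 ≤ k ≤ i−1} ∪ {x^{±2}·x^{i+1−2k} : 1 ≤ k ≤ i}), one has Δ_{i+1}(z) · ∏_{k=1}^{i−1} Δ_1(x^{−i+2k} z) = ∏_{k=1}^{i} Δ_2(x^{−i−1+2k} z). (This is relation (4.9) of Lemma 4.5, an identity of rational functions.) -/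
lemma xp_mul (x : ℝ) (hx : 0 < x) (s t : ℝ) : xp x s * xp x t = xp x (s + t) := by
  simp [xp, ← Complex.ofReal_mul, ← Real.rpow_add hx]

lemma icc_range (m : ℕ) (g : ℕ → ℂ) :
    ∏ k ∈ Finset.Icc 1 m, g k = ∏ k ∈ Finset.range m, g (1 + k) := by
  rw [← Finset.Ico_add_one_right_eq_Icc, Finset.prod_Ico_eq_prod_range]
  simp

/-- Relation (4.9) of Lemma 4.5: the rational-function identity
`Δ_{i+1}(z) · ∏_{k=1}^{i-1} Δ_1(x^{-i+2k} z) = ∏_{k=1}^{i} Δ_2(x^{-i-1+2k} z)`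
for every `z` at which all the denominators are nonzero. -/
theorem statement5 (x r : ℝ) (hx0 : 0 < x) (hx1 : x < 1) (hr : 1 < r)
    (i : ℕ) (hi : 2 ≤ i) (z : ℂ)
    (h1 : z ≠ xp x ((i : ℝ) + 1)) (h1' : z ≠ xp x (-((i : ℝ) + 1)))
    (h2 : ∀ k ∈ Finset.Icc 1 (i - 1),
      z ≠ xp x (1 + ((i : ℝ) - 2 * (k : ℝ))) ∧ z ≠ xp x (-1 + ((i : ℝ) - 2 * (k : ℝ))))
    (h3 : ∀ k ∈ Finset.Icc 1 i,
      z ≠ xp x (2 + ((i : ℝ) + 1 - 2 * (k : ℝ))) ∧ z ≠ xp x (-2 + ((i : ℝ) + 1 - 2 * (k : ℝ)))) :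
    Delta x r ((i : ℝ) + 1) z *
        ∏ k ∈ Finset.Icc 1 (i - 1), Delta x r 1 (xp x (-(i : ℝ) + 2 * (k : ℝ)) * z) =
      ∏ k ∈ Finset.Icc 1 i, Delta x r 2 (xp x (-(i : ℝ) - 1 + 2 * (k : ℝ)) * z) := by
  obtain ⟨j, rfl⟩ : ∃ j, i = j + 2 := ⟨i - 2, by omega⟩
  have hxp : ∀ s t : ℝ, xp x s * (xp x t * z) = xp x (s + t) * z := fun s t => by
    rw [← mul_assoc, xp_mul x hx0]
  simp only [Delta, hxp]
  have hm1 : j + 2 - 1 = j + 1 := by omega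
  rw [hm1, Finset.prod_div_distrib, Finset.prod_div_distrib, div_mul_div_comm]
  let f : ℝ → ℂ := fun t => 1 - xp x t * z
  show (f (2*r - ((↑(j+2):ℝ)+1)) * f (-(2*r) + ((↑(j+2):ℝ)+1))) *
      (∏ k ∈ Finset.Icc 1 (j+1),
        f (2*r - 1 + (-(↑(j+2):ℝ) + 2*(k:ℝ))) * f (-(2*r) + 1 + (-(↑(j+2):ℝ) + 2*(k:ℝ)))) /
      ((f ((↑(j+2):ℝ)+1) * f (-((↑(j+2):ℝ)+1))) *
      (∏ k ∈ Finset.Icc 1 (j+1),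
        f ((1:ℝ) + (-(↑(j+2):ℝ) + 2*(k:ℝ))) * f (-(1:ℝ) + (-(↑(j+2):ℝ) + 2*(k:ℝ))))) =
    (∏ k ∈ Finset.Icc 1 (j+2),
        f (2*r - 2 + (-(↑(j+2):ℝ) - 1 + 2*(k:ℝ))) * f (-(2*r) + 2 + (-(↑(j+2):ℝ) - 1 + 2*(k:ℝ)))) /
      (∏ k ∈ Finset.Icc 1 (j+2),
        f ((2:ℝ) + (-(↑(j+2):ℝ) - 1 + 2*(k:ℝ))) * f (-(2:ℝ) + (-(↑(j+2):ℝ) - 1 + 2*(k:ℝ))))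
  have fc : ∀ {s t : ℝ}, s = t → f s = f t := fun h => by rw [h]
  have comm : ∀ a b p q : ℂ, (a * b) * (p * q) = (p * a) * (q * b) := fun a b p q => by ring
  congr 1
  · rw [Finset.prod_mul_distrib, Finset.prod_mul_distrib,
      icc_range (j+1), icc_range (j+1), icc_range (j+2), icc_range (j+2),
      Finset.prod_range_succ' (fun k => f (2 * r - 2 + (-(↑(j+2):ℝ) - 1 + 2 * (↑(1+k):ℝ)))),
      Finset.prod_range_succ (fun k => f (-(2*r) + 2 + (-(↑(j+2):ℝ) - 1 + 2 * (↑(1+k):ℝ))))]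
    have e1 : f (2 * r - ((↑(j+2):ℝ) + 1)) = f (2 * r - 2 + (-(↑(j+2):ℝ) - 1 + 2 * ((1+0 : ℕ) : ℝ))) := fc (by push_cast; ring)
    have e2 : (∏ k ∈ Finset.range (j+1), f (2 * r - 1 + (-(↑(j+2):ℝ) + 2 * (↑(1+k):ℝ)))) =
        ∏ k ∈ Finset.range (j+1), f (2 * r - 2 + (-(↑(j+2):ℝ) - 1 + 2 * (↑(1+(k+1)):ℝ))) := by
      refine Finset.prod_congr rfl fun k _ => ?_
      exact fc (by push_cast; ring)
    have e3 : f (-(2 * r) + ((↑(j+2):ℝ) + 1)) =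
        f (-(2*r) + 2 + (-(↑(j+2):ℝ) - 1 + 2 * (↑(1+(j+1)):ℝ))) := fc (by push_cast; ring)
    have e4 : (∏ k ∈ Finset.range (j+1), f (-(2 * r) + 1 + (-(↑(j+2):ℝ) + 2 * (↑(1+k):ℝ)))) =
        ∏ k ∈ Finset.range (j+1), f (-(2*r) + 2 + (-(↑(j+2):ℝ) - 1 + 2 * (↑(1+k):ℝ))) := by
      refine Finset.prod_congr rfl fun k _ => ?_
      exact fc (by push_cast; ring)
    rw [e1, e2, e3, e4]; exact comm _ _ _ _
  · rw [Finset.prod_mul_distrib, Finset.prod_mul_distrib,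
      icc_range (j+1), icc_range (j+1), icc_range (j+2), icc_range (j+2),
      Finset.prod_range_succ (fun k => f (2 + (-(↑(j+2):ℝ) - 1 + 2 * (↑(1+k):ℝ)))),
      Finset.prod_range_succ' (fun k => f (-2 + (-(↑(j+2):ℝ) - 1 + 2 * (↑(1+k):ℝ))))]
    have e1 : f ((↑(j+2):ℝ) + 1) = f (2 + (-(↑(j+2):ℝ) - 1 + 2 * (↑(1+(j+1)):ℝ))) := fc (by push_cast; ring)
    have e2 : (∏ k ∈ Finset.range (j+1), f ((1:ℝ) + (-(↑(j+2):ℝ) + 2 * (↑(1+k):ℝ)))) =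
        ∏ k ∈ Finset.range (j+1), f (2 + (-(↑(j+2):ℝ) - 1 + 2 * (↑(1+k):ℝ))) := by
      refine Finset.prod_congr rfl fun k _ => ?_
      exact fc (by push_cast; ring)
    have e3 : f (-((↑(j+2):ℝ) + 1)) = f (-2 + (-(↑(j+2):ℝ) - 1 + 2 * ((1+0 : ℕ) : ℝ))) := fc (by push_cast; ring)
    have e4 : (∏ k ∈ Finset.range (j+1), f (-(1:ℝ) + (-(↑(j+2):ℝ) + 2 * (↑(1+k):ℝ)))) =
        ∏ k ∈ Finset.range (j+1), f (-2 + (-(↑(j+2):ℝ) - 1 + 2 * (↑(1+(k+1)):ℝ))) := by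
      refine Finset.prod_congr rfl fun k _ => ?_
      exact fc (by push_cast; ring)
    rw [e1, e2, e3, e4]; exact comm _ _ _ _
end

section
/- Let x be a real number with x > 0 and x ≠ 1, let a be a real number, and let m, i be positive integers. Then [(a−1)m]_x · Σ_{k=1}^{i} x^{(−i+2k−1)m} − [a m]_x · Σ_{k=1}^{i−1} x^{(−i+2k)m} = [(a−i)m]_x. (This q-integer summation identity is the key computation in the proof of Lemma 4.5 of the paper on quadratic relations of the deformed W-superalgebra W_{q,t}(A(M,N)).) -/
lemma geom_sum_aux (x : ℝ) (hx0 : 0 < x) (m : ℕ) : ∀ i : ℕ,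
    (x ^ (m : ℝ) - x ^ (-(m : ℝ))) *
      (∑ k ∈ Finset.Icc 1 i, x ^ ((-(i : ℝ) + 2 * (k : ℝ) - 1) * m)) =
    x ^ ((i : ℝ) * m) - x ^ (-((i : ℝ) * m)) := by
  intro i
  induction i with
  | zero => simp
  | succ i ih =>
    rw [Finset.sum_Icc_succ_top (by omega : 1 ≤ i + 1)]
    have hsum : (∑ k ∈ Finset.Icc 1 i, x ^ ((-((i : ℕ) + 1 : ℝ) + 2 * (k : ℝ) - 1) * m)) =
        (∑ k ∈ Finset.Icc 1 i, x ^ ((-(i : ℝ) + 2 * (k : ℝ) - 1) * m)) * x ^ (-(m : ℝ)) := by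
      rw [Finset.sum_mul]
      refine Finset.sum_congr rfl fun k _ => ?_
      rw [← Real.rpow_add hx0]
      ring_nf
    push_cast
    rw [hsum]
    have e1 : x ^ (((i : ℝ) + 1) * m) = x ^ ((i : ℝ) * m) * x ^ (m : ℝ) := by
      rw [← Real.rpow_add hx0]; ring_nf
    have e2 : x ^ (-(((i : ℝ) + 1) * m)) = x ^ (-((i : ℝ) * m)) * x ^ (-(m : ℝ)) := by
      rw [← Real.rpow_add hx0]; ring_nf
    have e3 : x ^ ((-((i : ℝ) + 1) + 2 * ((i : ℝ) + 1) - 1) * m) = x ^ ((i : ℝ) * m) := by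
      ring_nf
    rw [e1, e2, e3]
    linear_combination x ^ (-(m : ℝ)) * ih

/-- The key q-integer summation identity in the proof of Lemma 4.5:
`[(a-1)m]_x Σ_{k=1}^{i} x^{(-i+2k-1)m} - [am]_x Σ_{k=1}^{i-1} x^{(-i+2k)m} = [(a-i)m]_x`. -/
theorem statement6 (x : ℝ) (hx0 : 0 < x) (hx1 : x ≠ 1) (a : ℝ)
    (m i : ℕ) (hm : 1 ≤ m) (hi : 1 ≤ i) :
    qint x ((a - 1) * m) * (∑ k ∈ Finset.Icc 1 i, x ^ ((-(i : ℝ) + 2 * (k : ℝ) - 1) * m)) -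
        qint x (a * m) * (∑ k ∈ Finset.Icc 1 (i - 1), x ^ ((-(i : ℝ) + 2 * (k : ℝ)) * m)) =
      qint x ((a - i) * m) := by
  have hd : x - x⁻¹ ≠ 0 := by
    intro h
    have hx : x * x = 1 := by field_simp at h; linarith
    have : x = 1 := by nlinarith
    exact hx1 this
  have hdm : x ^ (m : ℝ) - x ^ (-(m : ℝ)) ≠ 0 := by
    have hmm : -(m : ℝ) < (m : ℝ) := by
      have : (0 : ℝ) < m := by exact_mod_cast hm
      linarith
    rcases lt_or_gt_of_ne hx1 with h | h
    · have := (Real.rpow_lt_rpow_left_iff_of_base_lt_one hx0 h).mpr hmm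
      linarith
    · have := (Real.rpow_lt_rpow_left_iff h).mpr hmm
      linarith
  have hcast : ((i - 1 : ℕ) : ℝ) = (i : ℝ) - 1 := by
    rw [Nat.cast_sub hi, Nat.cast_one]
  have hS2 : (∑ k ∈ Finset.Icc 1 (i - 1), x ^ ((-(i : ℝ) + 2 * (k : ℝ)) * m)) =
      (∑ k ∈ Finset.Icc 1 (i - 1), x ^ ((-((i - 1 : ℕ) : ℝ) + 2 * (k : ℝ) - 1) * m)) := by
    refine Finset.sum_congr rfl fun k _ => ?_
    rw [hcast]
    ring_nf
  have hS1 := geom_sum_aux x hx0 m i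
  have hS2' := geom_sum_aux x hx0 m (i - 1)
  rw [hS2] at *
  set S1 := (∑ k ∈ Finset.Icc 1 i, x ^ ((-(i : ℝ) + 2 * (k : ℝ) - 1) * m)) with hS1def
  set S2 := (∑ k ∈ Finset.Icc 1 (i - 1), x ^ ((-((i - 1 : ℕ) : ℝ) + 2 * (k : ℝ) - 1) * m))
  rw [hcast] at hS2'
  unfold qint
  -- decompose all rpow's into products of atoms
  have e1 : x ^ ((a - 1) * m) = x ^ (a * m) * x ^ (-(m : ℝ)) := by
    rw [← Real.rpow_add hx0]; ring_nf
  have e2 : x ^ (-((a - 1) * m)) = x ^ (-(a * m)) * x ^ (m : ℝ) := by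
    rw [← Real.rpow_add hx0]; ring_nf
  have e3 : x ^ ((a - i) * m) = x ^ (a * m) * x ^ (-((i : ℝ) * m)) := by
    rw [← Real.rpow_add hx0]; ring_nf
  have e4 : x ^ (-((a - i) * m)) = x ^ (-(a * m)) * x ^ ((i : ℝ) * m) := by
    rw [← Real.rpow_add hx0]; ring_nf
  have e5 : x ^ (((i : ℝ) - 1) * m) = x ^ ((i : ℝ) * m) * x ^ (-(m : ℝ)) := by
    rw [← Real.rpow_add hx0]; ring_nf
  have e6 : x ^ (-(((i : ℝ) - 1) * m)) = x ^ (-((i : ℝ) * m)) * x ^ (m : ℝ) := by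
    rw [← Real.rpow_add hx0]; ring_nf
  rw [e5, e6] at hS2'
  rw [e1, e2, e3, e4]
  set P := x ^ (a * (m : ℝ))
  set Q := x ^ (-(a * (m : ℝ)))
  set R := x ^ ((m : ℕ) : ℝ)
  set S := x ^ (-((m : ℕ) : ℝ))
  set T := x ^ ((i : ℝ) * (m : ℕ))
  set U := x ^ (-((i : ℝ) * (m : ℕ)))
  suffices h : (P * S - Q * R) * S1 - (P - Q) * S2 = P * U - Q * T by
    rw [div_mul_eq_mul_div, div_mul_eq_mul_div, div_sub_div_same, h]
  have key : (R - S) * ((P * S - Q * R) * S1 - (P - Q) * S2) = (R - S) * (P * U - Q * T) := by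
    linear_combination (P * S - Q * R) * hS1 - (P - Q) * hS2'
  exact mul_left_cancel₀ hdm key
end

section
/- Let x and r be real numbers with 0 < x < 1 and r > 1, and let i ≥ 1 be an integer. Then: (i) Δ_i(z) = Δ_i(z^{−1}) for every nonzero complex z with z ∉ {x^{i}, x^{−i}}; (ii) lim_{z→x^{i}} (z − x^{i})·Δ_i(z) = −x^{i}·[r]_x [r−i]_x (x − x^{−1})/[i]_x and lim_{z→x^{−i}} (z − x^{−i})·Δ_i(z) = x^{−i}·[r]_x [r−i]_x (x − x^{−1})/[i]_x. (These are the precise analytic content of the paper's formal-distribution identity Δ_i(z) − Δ_i(z^{−1}) = ([r]_x[r−i]_x/[i]_x)(x − x^{−1})(δ(x^{−i}z) − δ(x^{i}z)).) -/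
open Filter Topology

/-!
Writing `a = x^r` and `b = x^i`, one has `Δ_i = R(a²/b, b)` with
`R(A, B)(z) = (1 - Az)(1 - A⁻¹z)/((1 - Bz)(1 - B⁻¹z))`. Since
`(1 - Az)(1 - A⁻¹z) = z (z + z⁻¹ - A - A⁻¹)`, the factors `z` cancel and `R(A, B)` is a function
of `z + z⁻¹`, whence the symmetry under `z ↦ z⁻¹`. The poles at `b^{±1}` are simple:
`(z - B) R(A, B)(z) = -B (1 - Az)(1 - A⁻¹z)/(1 - Bz)` is continuous at `z = B`, and since
`R(A, B) = R(A, B⁻¹)` this one computation gives both residues. Finally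
`[n]_x (x - x⁻¹) = x^n - x^{-n}` turns the values at `z = b^{±1}` into
`∓[r]_x [r-i]_x (x - x⁻¹)/[i]_x`.
-/

section QuadRatio

variable {K : Type*} [Field K] {A B z : K}

def quadRatio (A B z : K) : K :=
  (1 - A * z) * (1 - A⁻¹ * z) / ((1 - B * z) * (1 - B⁻¹ * z))

lemma one_sub_mul_one_sub_inv_mul (hA : A ≠ 0) (hz : z ≠ 0) :
    (1 - A * z) * (1 - A⁻¹ * z) = z * (z + z⁻¹ - (A + A⁻¹)) := by
  field_simp
  ring

lemma quadRatio_eq (hA : A ≠ 0) (hB : B ≠ 0) (hz : z ≠ 0) :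
    quadRatio A B z = (z + z⁻¹ - (A + A⁻¹)) / (z + z⁻¹ - (B + B⁻¹)) := by
  rw [quadRatio, one_sub_mul_one_sub_inv_mul hA hz, one_sub_mul_one_sub_inv_mul hB hz,
    mul_div_mul_left _ _ hz]

lemma quadRatio_inv (hA : A ≠ 0) (hB : B ≠ 0) (hz : z ≠ 0) :
    quadRatio A B z⁻¹ = quadRatio A B z := by
  rw [quadRatio_eq hA hB hz, quadRatio_eq hA hB (inv_ne_zero hz), inv_inv, add_comm z⁻¹]

lemma quadRatio_inv_right (A B z : K) : quadRatio A B⁻¹ z = quadRatio A B z := by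
  rw [quadRatio, quadRatio, inv_inv, mul_comm (1 - B⁻¹ * z)]

lemma sub_mul_quadRatio (hB : B ≠ 0) (hz : z ≠ B) :
    (z - B) * quadRatio A B z = -B * ((1 - A * z) * (1 - A⁻¹ * z) / (1 - B * z)) := by
  by_cases h : 1 - B * z = 0
  · simp [quadRatio, h]
  · have h' : 1 - B⁻¹ * z ≠ 0 := by
      rw [sub_ne_zero, ne_comm, ne_eq, inv_mul_eq_one₀ hB]
      exact hz.symm
    rw [quadRatio]
    field_simp
    ring

lemma residue_factor_eq {a b : K} (ha : a ≠ 0) (hb : b ≠ 0) (hb2 : b * b ≠ 1) :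
    (1 - a ^ 2 / b * b) * (1 - (a ^ 2 / b)⁻¹ * b) / (1 - b * b)
      = (a - a⁻¹) * (a / b - (a / b)⁻¹) / (b - b⁻¹) := by
  have : 1 - b ^ 2 ≠ 0 := by rw [sq]; exact sub_ne_zero.2 hb2.symm
  have : b ^ 2 - 1 ≠ 0 := by rw [sq]; exact sub_ne_zero.2 hb2
  field_simp
  ring

lemma residue_factor_inv_eq {a b : K} (ha : a ≠ 0) (hb : b ≠ 0) (hb2 : b * b ≠ 1) :
    (1 - a ^ 2 / b * b⁻¹) * (1 - (a ^ 2 / b)⁻¹ * b⁻¹) / (1 - b⁻¹ * b⁻¹)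
      = -((a - a⁻¹) * (a / b - (a / b)⁻¹) / (b - b⁻¹)) := by
  have : 1 - b ^ 2 ≠ 0 := by rw [sq]; exact sub_ne_zero.2 hb2.symm
  have : b ^ 2 - 1 ≠ 0 := by rw [sq]; exact sub_ne_zero.2 hb2
  field_simp
  ring

end QuadRatio

lemma tendsto_sub_mul_quadRatio {K : Type*} [NormedField K] {A B : K} (hB : B ≠ 0)
    (hB2 : B * B ≠ 1) :
    Tendsto (fun z => (z - B) * quadRatio A B z) (𝓝[≠] B)
      (𝓝 (-B * ((1 - A * B) * (1 - A⁻¹ * B) / (1 - B * B)))) := by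
  have hcont : ContinuousAt (fun z => -B * ((1 - A * z) * (1 - A⁻¹ * z) / (1 - B * z))) B :=
    continuousAt_const.mul <| ContinuousAt.div (by fun_prop) (by fun_prop) (sub_ne_zero.2 hB2.symm)
  exact (hcont.tendsto.mono_left nhdsWithin_le_nhds).congr'
    (eventually_nhdsWithin_of_forall fun z hz => (sub_mul_quadRatio hB hz).symm)

lemma qint_eq {x : ℝ} (hx : 0 ≤ x) (t : ℝ) : qint x t = (x ^ t - (x ^ t)⁻¹) / (x - x⁻¹) := by
  rw [qint, Real.rpow_neg hx]

lemma qint_mul_qint_sub_div_qint {x : ℝ} (hx : 0 < x) (hx1 : x ≠ 1) (s t : ℝ) :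
    qint x s * qint x (s - t) * (x - x⁻¹) / qint x t
      = (x ^ s - (x ^ s)⁻¹) * (x ^ s / x ^ t - (x ^ s / x ^ t)⁻¹) / (x ^ t - (x ^ t)⁻¹) := by
  have hx2 : x ^ 2 - 1 ≠ 0 :=
    sub_ne_zero.2 ((pow_eq_one_iff_of_nonneg hx.le two_ne_zero).not.2 hx1)
  simp only [qint_eq hx.le, Real.rpow_sub hx]
  field_simp

lemma xp_neg {x : ℝ} (hx : 0 ≤ x) (t : ℝ) : xp x (-t) = (xp x t)⁻¹ := by
  simp [xp, Real.rpow_neg hx]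

lemma xp_two_mul_sub {x : ℝ} (hx : 0 < x) (r t : ℝ) : xp x (2 * r - t) = xp x r ^ 2 / xp x t := by
  simp only [xp, Real.rpow_sub hx, Real.rpow_mul hx.le, mul_comm (2 : ℝ) r, Real.rpow_two]
  push_cast
  ring

lemma Delta_eq_quadRatio {x : ℝ} (hx : 0 < x) (r t : ℝ) (z : ℂ) :
    Delta x r t z = quadRatio (xp x r ^ 2 / xp x t) (xp x t) z := by
  rw [Delta, quadRatio, ← xp_two_mul_sub hx, ← xp_neg hx.le, ← xp_neg hx.le, neg_sub',
    sub_neg_eq_add]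

theorem statement7_general (x r : ℝ) (hx0 : 0 < x) (hx1 : x < 1)
    (i : ℕ) (hi : 1 ≤ i) :
    (∀ z : ℂ, z ≠ 0 → z ≠ xp x (i : ℝ) → z ≠ xp x (-(i : ℝ)) →
      Delta x r (i : ℝ) z = Delta x r (i : ℝ) z⁻¹) ∧
    Tendsto (fun z : ℂ => (z - xp x (i : ℝ)) * Delta x r (i : ℝ) z)
      (𝓝[≠] (xp x (i : ℝ)))
      (𝓝 (((-(x ^ (i : ℝ)) * (qint x r * qint x (r - (i : ℝ)) * (x - x⁻¹)) /
        qint x (i : ℝ) : ℝ) : ℂ))) ∧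
    Tendsto (fun z : ℂ => (z - xp x (-(i : ℝ))) * Delta x r (i : ℝ) z)
      (𝓝[≠] (xp x (-(i : ℝ))))
      (𝓝 (((x ^ (-(i : ℝ)) * (qint x r * qint x (r - (i : ℝ)) * (x - x⁻¹)) /
        qint x (i : ℝ) : ℝ) : ℂ))) := by
  set a := xp x r
  set b := xp x (i : ℝ)
  have ha : a ≠ 0 := Complex.ofReal_ne_zero.2 (Real.rpow_pos_of_pos hx0 r).ne'
  have hb : b ≠ 0 := Complex.ofReal_ne_zero.2 (Real.rpow_pos_of_pos hx0 _).ne'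
  have hb2 : b * b ≠ 1 := by
    have hlt : x ^ (i : ℝ) < 1 := Real.rpow_lt_one hx0.le hx1 (by exact_mod_cast hi)
    have hpos : 0 < x ^ (i : ℝ) := Real.rpow_pos_of_pos hx0 _
    change ((x ^ (i : ℝ) : ℝ) : ℂ) * ((x ^ (i : ℝ) : ℝ) : ℂ) ≠ 1
    exact_mod_cast (mul_lt_one_of_nonneg_of_lt_one_left hpos.le hlt hlt.le).ne
  have hΔ : Delta x r (i : ℝ) = quadRatio (a ^ 2 / b) b := funext (Delta_eq_quadRatio hx0 r i)
  have hA : a ^ 2 / b ≠ 0 := div_ne_zero (pow_ne_zero 2 ha) hb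
  have hQ : ((qint x r * qint x (r - i) * (x - x⁻¹) / qint x i : ℝ) : ℂ)
      = (a - a⁻¹) * (a / b - (a / b)⁻¹) / (b - b⁻¹) := by
    rw [qint_mul_qint_sub_div_qint hx0 hx1.ne]
    push_cast
    rfl
  rw [hΔ, xp_neg hx0.le]
  refine ⟨fun z hz _ _ => (quadRatio_inv hA hb hz).symm, ?_, ?_⟩
  · convert tendsto_sub_mul_quadRatio (A := a ^ 2 / b) hb hb2 using 2
    rw [residue_factor_eq ha hb hb2, mul_div_assoc, Complex.ofReal_mul, Complex.ofReal_neg, hQ]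
    rfl
  · simp_rw [← quadRatio_inv_right (a ^ 2 / b) b]
    convert tendsto_sub_mul_quadRatio (A := a ^ 2 / b) (inv_ne_zero hb)
      (by rwa [← mul_inv, inv_ne_one]) using 2
    rw [residue_factor_inv_eq ha hb hb2, mul_div_assoc, Complex.ofReal_mul, hQ,
      Real.rpow_neg hx0.le, Complex.ofReal_inv, neg_mul_neg]
    rfl

/-- The analytic content of the formal-distribution identity
`Δ_i(z) - Δ_i(z⁻¹) = ([r]_x[r-i]_x/[i]_x)(x-x⁻¹)(δ(x^{-i}z) - δ(x^{i}z))`: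
(i) `Δ_i(z) = Δ_i(z⁻¹)` away from `0, x^{±i}`;
(ii) the residues of `Δ_i` at `z = x^{±i}` are `∓x^{±i}[r]_x[r-i]_x(x-x⁻¹)/[i]_x`. -/
theorem statement7 (x r : ℝ) (hx0 : 0 < x) (hx1 : x < 1) (hr : 1 < r)
    (i : ℕ) (hi : 1 ≤ i) :
    (∀ z : ℂ, z ≠ 0 → z ≠ xp x (i : ℝ) → z ≠ xp x (-(i : ℝ)) →
      Delta x r (i : ℝ) z = Delta x r (i : ℝ) z⁻¹) ∧
    Tendsto (fun z : ℂ => (z - xp x (i : ℝ)) * Delta x r (i : ℝ) z)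
      (𝓝[≠] (xp x (i : ℝ)))
      (𝓝 (((-(x ^ (i : ℝ)) * (qint x r * qint x (r - (i : ℝ)) * (x - x⁻¹)) /
        qint x (i : ℝ) : ℝ) : ℂ))) ∧
    Tendsto (fun z : ℂ => (z - xp x (-(i : ℝ))) * Delta x r (i : ℝ) z)
      (𝓝[≠] (xp x (-(i : ℝ))))
      (𝓝 (((x ^ (-(i : ℝ)) * (qint x r * qint x (r - (i : ℝ)) * (x - x⁻¹)) /
        qint x (i : ℝ) : ℝ) : ℂ))) :=
  statement7_general x r hx0 hx1 i hi
end

section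
/- Let q be a real number with 0 < q < 1, let M ≥ N ≥ 0 be integers with M + N ≥ 1, let 1 ≤ i ≤ j be integers, and let m ≥ 1 be an integer. For β ∈ (0,1) set r = 1/(1−β), x = q^{(1−β)/2}, and a = (N+1)r + M − N, and define c_m(β) = (1/m)·[(r−1)m]_x [rm]_x [i m]_x [(a−j)m]_x (x − x^{−1})²/([m]_x [a m]_x) (the m-th coefficient of the exponent series defining the structure function f_{i,j}(z; a) of W_{q,t}(A(M,N))). Then lim_{β→0⁺} c_m(β)/β = −(log q)·(q − q^{−1})·[i m/2]_q [ (j − M − 1)m/2 ]_q / [ (M+1)m/2 ]_q, where for real s, [s]_q = (q^{s} − q^{−s})/(q − q^{−1}). (This is the β-expansion f_{i,j}(z; a) = 1 + β·log q·Σ_{m≥1} ([i m/2]_q [(j−M−1)m/2]_q/[(M+1)m/2]_q)(q − q^{−1}) z^m + O(β²) underlying the classical limit to the q-Poisson W-superalgebra in Proposition 4.9.) -/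
/-! Writing `x = q^{(1-β)/2}`, every q-integer is a ratio of hyperbolic sines of multiples of
`(1-β) log q / 2`. In `c_m(β)` the factor `[(r-1)m]_x` becomes `sinh (β m log q / 2)`, which
vanishes to first order at `β = 0`, while the remaining factors form a function continuous at
`β = 0`. So `c_m(β)/β` tends to `(m log q / 2)` times the value of that cofactor at `0`, which is
the stated limit once the q-integers in base `q` are rewritten with `sinh` as well. -/

open Filter Topology

open Real

lemma qint_eq_sinh {x : ℝ} (hx : 0 < x) (n : ℝ) :
    qint x n = sinh (n * log x) / sinh (log x) := by
  obtain ⟨ℓ, rfl⟩ : ∃ ℓ, x = exp ℓ := ⟨log x, (exp_log hx).symm⟩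
  rw [qint, log_exp, ← exp_mul, ← exp_mul, ← exp_neg, sinh_eq, sinh_eq,
    div_div_div_cancel_right₀ two_ne_zero, mul_comm n, mul_neg]

lemma sub_inv_eq_two_mul_sinh {x : ℝ} (hx : 0 < x) : x - x⁻¹ = 2 * sinh (log x) := by
  obtain ⟨ℓ, rfl⟩ : ∃ ℓ, x = exp ℓ := ⟨log x, (exp_log hx).symm⟩
  rw [log_exp, ← exp_neg, sinh_eq]
  ring

lemma qint_mul_div_eq_sinh {x : ℝ} (hx : 0 < x) (hℓ : log x ≠ 0) (m u₁ u₂ u₃ u₄ u₅ u₆ : ℝ) :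
    1 / m * qint x u₁ * qint x u₂ * qint x u₃ * qint x u₄ * (x - x⁻¹) ^ 2 /
        (qint x u₅ * qint x u₆) =
      4 / m * (sinh (u₁ * log x) * sinh (u₂ * log x) * sinh (u₃ * log x) * sinh (u₄ * log x)) /
        (sinh (u₅ * log x) * sinh (u₆ * log x)) := by
  have hs : sinh (log x) ≠ 0 := sinh_ne_zero.mpr hℓ
  simp only [qint_eq_sinh hx, sub_inv_eq_two_mul_sinh hx]
  field_simp
  ring

lemma tendsto_sinh_mul_div_self (c : ℝ) :
    Tendsto (fun β => sinh (β * c) / β) (𝓝[≠] 0) (𝓝 c) := by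
  have h : HasDerivAt (fun β => sinh (β * c)) c 0 := by
    simpa using ((hasDerivAt_id (0 : ℝ)).mul_const c).sinh
  simpa [div_eq_inv_mul] using h.tendsto_slope_zero

section StructureCoeff

variable (q : ℝ) (M N i j m : ℕ)

noncomputable def structureCoeff (β : ℝ) : ℝ :=
  let r : ℝ := 1 / (1 - β)
  let x : ℝ := q ^ ((1 - β) / 2)
  let a : ℝ := ((N : ℝ) + 1) * r + (M : ℝ) - (N : ℝ)
  (1 / (m : ℝ)) * qint x ((r - 1) * m) * qint x (r * m) * qint x ((i : ℝ) * m) *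
      qint x ((a - (j : ℝ)) * m) * (x - x⁻¹) ^ 2 /
    (qint x (m : ℝ) * qint x (a * m))

noncomputable def structureCoeffCofactor (β : ℝ) : ℝ :=
  let r : ℝ := 1 / (1 - β)
  let ℓ : ℝ := (1 - β) / 2 * log q
  let a : ℝ := ((N : ℝ) + 1) * r + (M : ℝ) - (N : ℝ)
  4 / m * (sinh (r * m * ℓ) * sinh (i * m * ℓ) * sinh ((a - j) * m * ℓ)) /
    (sinh (m * ℓ) * sinh (a * m * ℓ))

variable {q}

lemma structureCoeff_eq_sinh_mul {β : ℝ} (hq : 0 < q) (hL : log q ≠ 0) (hβ : β ≠ 1) :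
    structureCoeff q M N i j m β =
      sinh (β * (m * log q / 2)) * structureCoeffCofactor q M N i j m β := by
  have hβ' : 1 - β ≠ 0 := sub_ne_zero.mpr hβ.symm
  rw [structureCoeff, structureCoeffCofactor,
    qint_mul_div_eq_sinh (rpow_pos_of_pos hq _) (by rw [log_rpow hq]; positivity), log_rpow hq,
    show (1 / (1 - β) - 1) * m * ((1 - β) / 2 * log q) = β * (m * log q / 2) by field_simp; ring]
  ring

lemma structureCoeffCofactor_zero :
    structureCoeffCofactor q M N i j m 0 =
      4 / m * (sinh (m / 2 * log q) * sinh (i * m / 2 * log q) *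
        -sinh ((j - M - 1) * m / 2 * log q)) /
        (sinh (m / 2 * log q) * sinh ((M + 1) * m / 2 * log q)) := by
  rw [structureCoeffCofactor, ← sinh_neg]
  ring_nf

lemma continuousAt_structureCoeffCofactor (hL : log q ≠ 0) (hm : m ≠ 0) :
    ContinuousAt (structureCoeffCofactor q M N i j m) 0 := by
  have hsinh : Continuous sinh := continuous_sinh
  refine ContinuousAt.div (by fun_prop (disch := norm_num)) (by fun_prop (disch := norm_num)) ?_
  norm_num [sinh_eq_zero, hL, hm]
  ring_nf
  positivity

end StructureCoeff

theorem statement13_general (q : ℝ) (hq0 : 0 < q) (hq1 : q < 1) (M N : ℕ)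
    (i j m : ℕ) (hm : 1 ≤ m) :
    Tendsto
      (fun β : ℝ =>
        (let r : ℝ := 1 / (1 - β)
         let x : ℝ := q ^ ((1 - β) / 2)
         let a : ℝ := ((N : ℝ) + 1) * r + (M : ℝ) - (N : ℝ)
         (1 / (m : ℝ)) * qint x ((r - 1) * m) * qint x (r * m) * qint x ((i : ℝ) * m) *
             qint x ((a - (j : ℝ)) * m) * (x - x⁻¹) ^ 2 /
           (qint x (m : ℝ) * qint x (a * m))) / β)
      (𝓝[>] (0 : ℝ))
      (𝓝 (-Real.log q * (q - q⁻¹) * qint q ((i : ℝ) * m / 2) *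
        qint q (((j : ℝ) - (M : ℝ) - 1) * m / 2) / qint q (((M : ℝ) + 1) * m / 2))) := by
  have hL : log q ≠ 0 := (log_neg hq0 hq1).ne
  have hm0 : m ≠ 0 := by omega
  change Tendsto (fun β => structureCoeff q M N i j m β / β) _ _
  have hlim := ((tendsto_sinh_mul_div_self (m * log q / 2)).mono_left (nhdsGT_le_nhdsNE 0)).mul
    ((continuousAt_structureCoeffCofactor M N i j m hL hm0).tendsto.mono_left nhdsWithin_le_nhds)
  convert hlim.congr' ?_ using 2
  · have hsL : sinh (log q) ≠ 0 := sinh_ne_zero.mpr hL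
    have hsm : sinh (m / 2 * log q) ≠ 0 := sinh_ne_zero.mpr (by positivity)
    rw [structureCoeffCofactor_zero]
    simp only [qint_eq_sinh hq0, sub_inv_eq_two_mul_sinh hq0]
    field_simp
    ring
  · filter_upwards [Ioo_mem_nhdsGT zero_lt_one] with β ⟨_, hβ1⟩
    rw [structureCoeff_eq_sinh_mul M N i j m hq0 hL hβ1.ne]
    ring

/-- The β-expansion underlying the classical limit to the q-Poisson W-superalgebra
(Proposition 4.9): with `r = 1/(1-β)`, `x = q^{(1-β)/2}`, `a = (N+1)r + M - N`,
the `m`-th exponent coefficient `c_m(β)` of the structure function `f_{i,j}(z;a)` of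
`W_{q,t}(A(M,N))` satisfies
`lim_{β→0⁺} c_m(β)/β = -(log q)(q - q⁻¹)[im/2]_q[(j-M-1)m/2]_q/[(M+1)m/2]_q`. -/
theorem statement13 (q : ℝ) (hq0 : 0 < q) (hq1 : q < 1) (M N : ℕ) (hNM : N ≤ M)
    (hMN : 1 ≤ M + N) (i j m : ℕ) (hi : 1 ≤ i) (hij : i ≤ j) (hm : 1 ≤ m) :
    Tendsto
      (fun β : ℝ =>
        (let r : ℝ := 1 / (1 - β)
         let x : ℝ := q ^ ((1 - β) / 2)
         let a : ℝ := ((N : ℝ) + 1) * r + (M : ℝ) - (N : ℝ)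
         (1 / (m : ℝ)) * qint x ((r - 1) * m) * qint x (r * m) * qint x ((i : ℝ) * m) *
             qint x ((a - (j : ℝ)) * m) * (x - x⁻¹) ^ 2 /
           (qint x (m : ℝ) * qint x (a * m))) / β)
      (𝓝[>] (0 : ℝ))
      (𝓝 (-Real.log q * (q - q⁻¹) * qint q ((i : ℝ) * m / 2) *
        qint q (((j : ℝ) - (M : ℝ) - 1) * m / 2) / qint q (((M : ℝ) + 1) * m / 2))) :=
  statement13_general q hq0 hq1 M N i j m hm
end
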